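/- Each connected component of the graph G_{s,k} contains exactly one out-vertex and exactly one in-vertex. -/

import Mathlib

/-!
Orient every edge of `G_{s,k}` along its move `(i_p, i_{p+1}) ↦ (i_{p+1} - 1, i_p)`. A move
lowers the weight `∑ j * i_j` by `p + i_{p+1} - i_p > 0`, so moves terminate, and two moves out of
one tuple can be joined again: at distant positions they commute, at adjacent positions they
satisfy a braid relation. By Newman's lemma each component has exactly one tuple admitting no
move, and these are the weakly decreasing tuples, i.e. the in-vertices. The involution
`i_j ↦ s + j - i_j` reverses every edge and exchanges strictly increasing and weakly decreasing
tuples, so the out-vertices of a component are the images of the in-vertices of its image.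
-/

/-- A directed edge of the graph `G_{s,k}`: `w` is obtained from `v` by replacing an
adjacent pair `(v_p, v_{p+1})` with `v_p < v_{p+1}` by `(v_{p+1} - 1, v_p)`. -/
def CohStep (k : ℕ) (v w : Fin (k + 1) → ℕ) : Prop :=
  ∃ p : Fin k, v p.castSucc < v p.succ ∧
    w p.castSucc = v p.succ - 1 ∧ w p.succ = v p.castSucc ∧
    ∀ q : Fin (k + 1), q ≠ p.castSucc → q ≠ p.succ → w q = v q

/-- The vertex set of `G_{s,k}`. -/
def GskVertex (s k : ℕ) : Type :=
  {v : Fin (k + 1) → ℕ // ∀ j : Fin (k + 1), v j ≤ s + (j : ℕ)}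

/-- The (undirected) graph `G_{s,k}`. -/
def Gsk (s k : ℕ) : SimpleGraph (GskVertex s k) :=
  SimpleGraph.fromRel (fun v w => CohStep k v.1 w.1)

namespace Relation

variable {α : Type*} {r : α → α → Prop}

theorem newman (wf : WellFounded (flip r))
    (lc : ∀ a b c, r a b → r a c → Join (ReflTransGen r) b c) {a b c : α}
    (hab : ReflTransGen r a b) (hac : ReflTransGen r a c) : Join (ReflTransGen r) b c := by
  induction a using wf.induction generalizing b c with
  | _ a ih =>
    rcases hab.cases_head with rfl | ⟨b₁, hab₁, hb₁b⟩
    · exact ⟨c, hac, .refl⟩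
    rcases hac.cases_head with rfl | ⟨c₁, hac₁, hc₁c⟩
    · exact ⟨b, .refl, .head hab₁ hb₁b⟩
    obtain ⟨d, hb₁d, hc₁d⟩ := lc a b₁ c₁ hab₁ hac₁
    obtain ⟨e, hbe, hde⟩ := ih b₁ hab₁ hb₁b hb₁d
    obtain ⟨f, hcf, hef⟩ := ih c₁ hac₁ hc₁c (hc₁d.trans hde)
    exact ⟨f, hbe.trans hef, hcf⟩

theorem exists_reflTransGen_normal (wf : WellFounded (flip r)) (a : α) :
    ∃ b, ReflTransGen r a b ∧ ∀ c, ¬ r b c := by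
  obtain ⟨b, hab, hmin⟩ := wf.has_min {b | ReflTransGen r a b} ⟨a, .refl⟩
  exact ⟨b, hab, fun c hbc => hmin c (hab.tail hbc) hbc⟩

theorem eq_of_eqvGen_of_normal (wf : WellFounded (flip r))
    (lc : ∀ a b c, r a b → r a c → Join (ReflTransGen r) b c) {a b : α} (h : EqvGen r a b)
    (ha : ∀ c, ¬ r a c) (hb : ∀ c, ¬ r b c) : a = b := by
  have := (equivalence_join fun _ _ _ hab hac => newman wf lc hab hac).isEquiv
  obtain ⟨d, had, hbd⟩ := EqvGen.eqvGen_le (r' := Join (ReflTransGen r))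
    (fun _ _ hab => ⟨_, .single hab, .refl⟩) _ _ h
  rcases had.cases_head with rfl | ⟨c, hac, -⟩
  · rcases hbd.cases_head with rfl | ⟨c, hbc, -⟩
    · rfl
    · exact absurd hbc (hb c)
  · exact absurd hac (ha c)

end Relation

open Relation Function

namespace CohStep

variable {k : ℕ} {v w : Fin (k + 1) → ℕ}

def move (v : Fin (k + 1) → ℕ) (p : Fin k) : Fin (k + 1) → ℕ :=
  update (update v p.castSucc (v p.succ - 1)) p.succ (v p.castSucc)

theorem move_apply_of_ne {p : Fin k} {j : Fin (k + 1)} (h₁ : j ≠ p.castSucc)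
    (h₂ : j ≠ p.succ) : move v p j = v j := by
  rw [move, update_of_ne h₂, update_of_ne h₁]

theorem move_apply_castSucc (p : Fin k) : move v p p.castSucc = v p.succ - 1 := by
  simp [move, Fin.castSucc_lt_succ.ne]

theorem move_apply_succ (p : Fin k) : move v p p.succ = v p.castSucc := by
  simp [move]

theorem iff_exists_move :
    CohStep k v w ↔ ∃ p : Fin k, v p.castSucc < v p.succ ∧ w = move v p := by
  constructor
  · rintro ⟨p, hlt, h₁, h₂, h₃⟩
    refine ⟨p, hlt, funext fun j => ?_⟩
    by_cases hj₁ : j = p.castSucc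
    · rw [hj₁, h₁, move_apply_castSucc]
    by_cases hj₂ : j = p.succ
    · rw [hj₂, h₂, move_apply_succ]
    · rw [move_apply_of_ne hj₁ hj₂, h₃ j hj₁ hj₂]
  · rintro ⟨p, hlt, rfl⟩
    exact ⟨p, hlt, move_apply_castSucc p, move_apply_succ p, fun _ => move_apply_of_ne⟩

theorem move_of_lt {p : Fin k} (h : v p.castSucc < v p.succ) : CohStep k v (move v p) :=
  iff_exists_move.mpr ⟨p, h, rfl⟩

def weight (v : Fin (k + 1) → ℕ) : ℕ := ∑ j : Fin (k + 1), (j : ℕ) * v j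

theorem weight_lt (h : CohStep k v w) : weight w < weight v := by
  obtain ⟨p, hlt, rfl⟩ := iff_exists_move.mp h
  have hdiff : (weight v : ℤ) - weight (move v p) =
      p.castSucc * ((v p.castSucc : ℤ) - move v p p.castSucc) +
        p.succ * ((v p.succ : ℤ) - move v p p.succ) := by
    simp only [weight, Nat.cast_sum, Nat.cast_mul, ← Finset.sum_sub_distrib, ← mul_sub]
    refine Fintype.sum_eq_add _ _ Fin.castSucc_lt_succ.ne fun j hj => ?_
    rw [move_apply_of_ne hj.1 hj.2, sub_self, mul_zero]
  rw [move_apply_castSucc, move_apply_succ] at hdiff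
  push_cast [Nat.one_le_iff_ne_zero.mpr (by omega : v p.succ ≠ 0), Fin.val_succ,
    Fin.val_castSucc] at hdiff
  have : (weight v : ℤ) - weight (move v p) = p + v p.succ - v p.castSucc := by
    rw [hdiff]; ring
  omega

theorem wellFounded_flip : WellFounded (flip (CohStep k)) :=
  Subrelation.wf (fun h => weight_lt h) (InvImage.wf weight wellFounded_lt)

theorem move_comm {p q : Fin k} (h : (p : ℕ) + 1 < q) :
    move (move v p) q = move (move v q) p := by
  funext j
  simp only [move, update_apply, Fin.ext_iff, Fin.val_succ, Fin.val_castSucc]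
  split_ifs <;> omega

theorem move_braid {p q : Fin k} (h : (p : ℕ) + 1 = q) :
    move (move (move v p) q) p = move (move (move v q) p) q := by
  have hqp : q.castSucc = p.succ := Fin.ext (by simp [← h])
  funext j
  simp only [move, hqp, update_apply, Fin.ext_iff, Fin.val_succ, Fin.val_castSucc]
  split_ifs <;> omega

theorem join_move_of_le {p q : Fin k} (hpq : p ≤ q) (hp : v p.castSucc < v p.succ)
    (hq : v q.castSucc < v q.succ) :
    Join (ReflTransGen (CohStep k)) (move v p) (move v q) := by
  rcases hpq.eq_or_lt with rfl | hpq
  · exact ⟨_, .refl, .refl⟩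
  rw [Fin.lt_def, Nat.lt_iff_add_one_le] at hpq
  rcases hpq.eq_or_lt with hpq | hpq
  · have hqp : q.castSucc = p.succ := Fin.ext (by simp [← hpq])
    refine ⟨move (move (move v p) q) p, .head (move_of_lt ?_) (.single (move_of_lt ?_)), ?_⟩
    on_goal 3 => rw [move_braid hpq]; refine .head (move_of_lt ?_) (.single (move_of_lt ?_))
    all_goals
      simp only [move, hqp, update_apply, Fin.ext_iff, Fin.val_succ, Fin.val_castSucc] at hq ⊢
      split_ifs <;> omega
  · refine ⟨move (move v p) q, .single (move_of_lt ?_), ?_⟩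
    on_goal 2 => rw [move_comm hpq]; refine .single (move_of_lt ?_)
    all_goals
      simp only [move, update_apply, Fin.ext_iff, Fin.val_succ, Fin.val_castSucc]
      split_ifs <;> omega

theorem locallyConfluent {a b c : Fin (k + 1) → ℕ} (hb : CohStep k a b) (hc : CohStep k a c) :
    Join (ReflTransGen (CohStep k)) b c := by
  obtain ⟨p, hp, rfl⟩ := iff_exists_move.mp hb
  obtain ⟨q, hq, rfl⟩ := iff_exists_move.mp hc
  rcases le_total p q with hpq | hqp
  · exact join_move_of_le hpq hp hq
  · exact Join.symm.symm _ _ (join_move_of_le hqp hq hp)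

theorem forall_not_iff :
    (∀ w, ¬ CohStep k v w) ↔ ∀ p : Fin k, v p.succ ≤ v p.castSucc := by
  refine ⟨fun h p => not_lt.mp fun hp => h _ (move_of_lt hp), ?_⟩
  rintro h w ⟨p, hp, -⟩
  exact (h p).not_gt hp

theorem forall_le_add {s : ℕ} (h : CohStep k v w) (hv : ∀ j : Fin (k + 1), v j ≤ s + j) :
    ∀ j : Fin (k + 1), w j ≤ s + j := by
  obtain ⟨p, -, rfl⟩ := iff_exists_move.mp h
  intro j
  have hj := hv j
  have hp := hv p.castSucc
  have hp' := hv p.succ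
  simp only [Fin.val_succ, Fin.val_castSucc] at hp hp'
  simp only [move, update_apply, Fin.ext_iff, Fin.val_succ, Fin.val_castSucc]
  split_ifs <;> omega

end CohStep

namespace Gsk

variable {s k : ℕ}

theorem adj_of_cohStep {v w : GskVertex s k} (h : CohStep k v.1 w.1) : (Gsk s k).Adj v w :=
  (SimpleGraph.fromRel_adj _ _ _).mpr
    ⟨fun hvw => (CohStep.weight_lt h).ne (by rw [hvw]), .inl h⟩

theorem exists_reachable_of_reflTransGen (v : GskVertex s k) {b : Fin (k + 1) → ℕ}
    (h : ReflTransGen (CohStep k) v.1 b) :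
    ∃ w : GskVertex s k, w.1 = b ∧ (Gsk s k).Reachable v w := by
  induction h with
  | refl => exact ⟨v, rfl, .rfl⟩
  | tail _ hstep ih =>
    obtain ⟨w, rfl, hvw⟩ := ih
    let w' : GskVertex s k := ⟨_, hstep.forall_le_add w.2⟩
    exact ⟨w', rfl, hvw.trans (adj_of_cohStep (w := w') hstep).reachable⟩

theorem eqvGen_cohStep_of_reachable {v w : GskVertex s k} (h : (Gsk s k).Reachable v w) :
    EqvGen (CohStep k) v.1 w.1 := by
  rw [SimpleGraph.reachable_iff_reflTransGen] at h
  induction h with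
  | refl => exact .refl _
  | tail _ hadj ih =>
    obtain ⟨-, hstep | hstep⟩ := (SimpleGraph.fromRel_adj _ _ _).mp hadj
    · exact .trans _ _ _ ih (.rel _ _ hstep)
    · exact .trans _ _ _ ih (.symm _ _ (.rel _ _ hstep))

theorem existsUnique_antitone_reachable (v : GskVertex s k) :
    ∃! w : GskVertex s k,
      (∀ p : Fin k, w.1 p.succ ≤ w.1 p.castSucc) ∧ (Gsk s k).Reachable v w := by
  obtain ⟨b, hvb, hb⟩ := exists_reflTransGen_normal CohStep.wellFounded_flip v.1
  obtain ⟨w, rfl, hvw⟩ := exists_reachable_of_reflTransGen v hvb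
  refine ⟨w, ⟨CohStep.forall_not_iff.mp hb, hvw⟩, fun w' ⟨hw', hvw'⟩ => Subtype.ext ?_⟩
  exact eq_of_eqvGen_of_normal CohStep.wellFounded_flip (fun _ _ _ => CohStep.locallyConfluent)
    (eqvGen_cohStep_of_reachable (hvw'.symm.trans hvw)) (CohStep.forall_not_iff.mpr hw') hb

end Gsk

namespace GskVertex

variable {s k : ℕ}

def dual (v : GskVertex s k) : GskVertex s k :=
  ⟨fun j => s + j - v.1 j, fun _ => Nat.sub_le _ _⟩

theorem dual_involutive : Involutive (dual : GskVertex s k → GskVertex s k) := fun v =>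
  Subtype.ext <| funext fun j => by have := v.2 j; simp only [dual]; omega

theorem cohStep_dual {v w : GskVertex s k} (h : CohStep k v.1 w.1) :
    CohStep k w.dual.1 v.dual.1 := by
  obtain ⟨p, hlt, h₁, h₂, h₃⟩ := h
  have hp := v.2 p.castSucc
  have hp' := v.2 p.succ
  simp only [Fin.val_succ, Fin.val_castSucc] at hp hp'
  refine ⟨p, ?_, ?_, ?_, fun j hj₁ hj₂ => by simp only [dual, h₃ j hj₁ hj₂]⟩ <;>
    simp only [dual, h₁, h₂, Fin.val_succ, Fin.val_castSucc] <;> omega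

def dualIso : Gsk s k ≃g Gsk s k where
  toEquiv := dual_involutive.toPerm _
  map_rel_iff' {v w} := by
    suffices ∀ v w : GskVertex s k, (Gsk s k).Adj v w → (Gsk s k).Adj v.dual w.dual from
      ⟨fun h => dual_involutive v ▸ dual_involutive w ▸ this _ _ h, this v w⟩
    intro v w h
    obtain ⟨-, hvw | hwv⟩ := (SimpleGraph.fromRel_adj _ _ _).mp h
    · exact (Gsk.adj_of_cohStep (cohStep_dual hvw)).symm
    · exact Gsk.adj_of_cohStep (cohStep_dual hwv)

theorem strictMono_iff_dual_antitone (v : GskVertex s k) :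
    StrictMono v.1 ↔ ∀ p : Fin k, v.dual.1 p.succ ≤ v.dual.1 p.castSucc := by
  rw [Fin.strictMono_iff_lt_succ]
  refine forall_congr' fun p => ?_
  have hp := v.2 p.castSucc
  have hp' := v.2 p.succ
  simp only [dual, Fin.val_succ, Fin.val_castSucc] at hp hp' ⊢
  omega

end GskVertex

theorem stmt5_general (s k : ℕ) (v : GskVertex s k) :
    (∃! o : GskVertex s k, StrictMono o.1 ∧ (Gsk s k).Reachable v o) ∧
    (∃! w : GskVertex s k, (∀ p : Fin k, w.1 p.succ ≤ w.1 p.castSucc) ∧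
      (Gsk s k).Reachable v w) := by
  refine ⟨(GskVertex.dualIso.toEquiv.existsUnique_congr fun o => ?_).mpr
    (Gsk.existsUnique_antitone_reachable v.dual), Gsk.existsUnique_antitone_reachable v⟩
  rw [GskVertex.strictMono_iff_dual_antitone]
  exact and_congr_right' (GskVertex.dualIso.reachable_iff (u := v) (v := o)).symm

/-- Each connected component of `G_{s,k}` contains exactly one out-vertex (a strictly
increasing tuple) and exactly one in-vertex (a weakly decreasing tuple, i.e. one from
which no directed edge starts). -/
theorem stmt5 (s k : ℕ) (hs : 1 ≤ s) (hk : 1 ≤ k) (v : GskVertex s k) :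
    (∃! o : GskVertex s k, StrictMono o.1 ∧ (Gsk s k).Reachable v o) ∧
    (∃! w : GskVertex s k, (∀ p : Fin k, w.1 p.succ ≤ w.1 p.castSucc) ∧
      (Gsk s k).Reachable v w) :=
  stmt5_general s k v
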